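/- Let G be a countable group with generating probability measure μ, Γ a μ-recurrent subgroup of infinite index. Then the expected return time of the μ-random walk to Γ is infinite, i.e., Γ is null recurrent. -/

import Mathlib

open scoped Classical BigOperators

noncomputable def stepHit {G : Type*} [Group G] (μ : G → ℝ) (Γ : Subgroup G)
    (x : G) (n : ℕ) (γ : G) : ℝ :=
  ∑' w : Fin n → G,
    if (∀ k, 1 ≤ k → k < n → x * ((List.ofFn w).take k).prod ∉ Γ) ∧
        x * (List.ofFn w).prod = γ
    then ∏ i, μ (w i) else 0

/-- Hitting measure `θ_x` of the subgroup `Γ` for the `μ`-random walk started at `x`. -/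
noncomputable def hitProb {G : Type*} [Group G] (μ : G → ℝ) (Γ : Subgroup G)
    (x γ : G) : ℝ :=
  ∑' n : ℕ, stepHit μ Γ x (n + 1) γ

/-- `P(τ > n)` for the walk started at the identity. -/
noncomputable def tailProb {G : Type*} [Group G] (μ : G → ℝ) (Γ : Subgroup G)
    (n : ℕ) : ℝ :=
  ∑' w : Fin n → G,
    if ∀ k, 1 ≤ k → k ≤ n → ((List.ofFn w).take k).prod ∉ Γ
    then ∏ i, μ (w i) else 0

open scoped ENNReal

namespace NullRec
variable {G : Type*} [Group G] [Countable G] (μ : G → ℝ) (Γ : Subgroup G)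

noncomputable def em (g : G) : ℝ≥0∞ := ENNReal.ofReal (μ g)

/-- snoc equivalence -/
def snocEquiv (n : ℕ) : (Fin n → G) × G ≃ (Fin (n + 1) → G) where
  toFun q := Fin.snoc q.1 q.2
  invFun w := (fun i => w i.castSucc, w (Fin.last n))
  left_inv := by
    rintro ⟨v, x⟩
    simp
  right_inv := by
    intro w
    simp [Fin.snoc_init_self]
    exact funext fun i => by
      refine Fin.lastCases ?_ ?_ i
      · simp
      · intro j; simp

lemma ofFn_snoc {n : ℕ} (v : Fin n → G) (x : G) :
    List.ofFn (Fin.snoc v x : Fin (n+1) → G) = List.ofFn v ++ [x] := by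
  rw [List.ofFn_succ']
  simp [List.concat_eq_append]

lemma prod_em_snoc {n : ℕ} (v : Fin n → G) (x : G) :
    (∏ i, em μ ((Fin.snoc v x : Fin (n+1) → G) i)) = (∏ i, em μ (v i)) * em μ x := by
  rw [Fin.prod_univ_castSucc]
  simp

/-- alive condition -/
def tcond (n : ℕ) (w : Fin n → G) : Prop :=
  ∀ k, 1 ≤ k → k ≤ n → ((List.ofFn w).take k).prod ∉ Γ

lemma tcond_snoc {n : ℕ} (v : Fin n → G) (x : G) (g : G)
    (hg : (List.ofFn v).prod * x = g) :
    tcond Γ (n+1) (Fin.snoc v x) ↔ tcond Γ n v ∧ g ∉ Γ := by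
  unfold tcond
  rw [ofFn_snoc]
  constructor
  · intro h
    refine ⟨fun k h1 hk => ?_, ?_⟩
    · have := h k h1 (le_trans hk (Nat.le_succ n))
      rwa [List.take_append_of_le_length (by simpa using hk)] at this
    · have := h (n+1) (by omega) le_rfl
      rwa [List.take_of_length_le (by simp), List.prod_append, List.prod_singleton, hg] at this
  · rintro ⟨h1, h2⟩ k hk1 hk2
    rcases Nat.lt_or_ge k (n+1) with hlt | hge
    · rw [List.take_append_of_le_length (by simpa using Nat.lt_succ_iff.mp hlt)]
      exact h1 k hk1 (Nat.lt_succ_iff.mp hlt)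
    · have hk : k = n + 1 := le_antisymm hk2 hge
      rw [List.take_of_length_le (by simp [hk]), List.prod_append, List.prod_singleton, hg]
      exact h2

noncomputable def EA : ℕ → G → ℝ≥0∞
  | 0, g => if g = 1 then 1 else 0
  | (n+1), g => if g ∈ Γ then 0 else ∑' h, EA n h * em μ (h⁻¹ * g)

noncomputable def EW (n : ℕ) (g : G) : ℝ≥0∞ :=
  ∑' w : Fin n → G,
    if tcond Γ n w ∧ (List.ofFn w).prod = g then ∏ i, em μ (w i) else 0

lemma tsum_ite_eq' {β : Type*} (b : β) (f : β → ℝ≥0∞) :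
    ∑' x, (if x = b then f x else 0) = f b := by
  rw [tsum_eq_single b]
  · simp
  · intro b' hb'; simp [hb']

lemma mid (n : ℕ) (g : G) :
    (∑' (v : Fin n → G) (x : G),
        if tcond Γ n v ∧ (List.ofFn v).prod * x = g then (∏ i, em μ (v i)) * em μ x else 0)
      = ∑' h, EW μ Γ n h * em μ (h⁻¹ * g) := by
  calc (∑' (v : Fin n → G) (x : G),
              if tcond Γ n v ∧ (List.ofFn v).prod * x = g then (∏ i, em μ (v i)) * em μ x else 0)
      = ∑' (v : Fin n → G),
          if tcond Γ n v then (∏ i, em μ (v i)) * em μ (((List.ofFn v).prod)⁻¹ * g) else 0 := by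
        refine tsum_congr fun v => ?_
        by_cases hc : tcond Γ n v
        · rw [if_pos hc, tsum_eq_single (((List.ofFn v).prod)⁻¹ * g)]
          · rw [if_pos ⟨hc, by group⟩]
          · intro x hx
            rw [if_neg]
            rintro ⟨-, hp⟩
            exact hx (by rw [← hp]; group)
        · simp [hc]
    _ = ∑' (h : G) (v : Fin n → G),
          if tcond Γ n v ∧ (List.ofFn v).prod = h
          then (∏ i, em μ (v i)) * em μ (h⁻¹ * g) else 0 := by
        rw [ENNReal.tsum_comm]
        refine tsum_congr fun v => ?_
        by_cases hc : tcond Γ n v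
        · rw [if_pos hc, tsum_eq_single ((List.ofFn v).prod)]
          · rw [if_pos ⟨hc, rfl⟩]
          · intro h hh
            rw [if_neg]
            rintro ⟨-, hp⟩
            exact hh hp.symm
        · simp [hc]
    _ = ∑' h, EW μ Γ n h * em μ (h⁻¹ * g) := by
        refine tsum_congr fun h => ?_
        rw [EW, ← ENNReal.tsum_mul_right]
        exact tsum_congr fun v => by rw [ite_mul, zero_mul]


lemma EW_eq_EA : ∀ n g, EW μ Γ n g = EA μ Γ n g := by
  intro n
  induction n with
  | zero =>
    intro g
    unfold EW EA
    rw [tsum_eq_single (fun i => (1:G))]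
    · simp only [tcond, List.ofFn_const]
      by_cases hg : g = 1
      · rw [if_pos ⟨fun k h1 h0 => absurd (h1.trans h0) (by omega), by simp [hg]⟩, if_pos hg]
        simp
      · rw [if_neg, if_neg hg]
        rintro ⟨-, hp⟩
        exact hg (by simpa using hp.symm)
    · intro w hw
      exact absurd (funext fun i => Fin.elim0 i) hw
  | succ n ih =>
    intro g
    unfold EW
    rw [← (snocEquiv n).tsum_eq]
    simp only [snocEquiv, Equiv.coe_fn_mk]
    have hprod : ∀ (v : Fin n → G) (x : G),
        (List.ofFn (Fin.snoc v x : Fin (n+1) → G)).prod = (List.ofFn v).prod * x := by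
      intro v x
      rw [ofFn_snoc, List.prod_append, List.prod_singleton]
    by_cases hg : g ∈ Γ
    · rw [EA, if_pos hg]
      refine ENNReal.tsum_eq_zero.2 ?_
      rintro ⟨v, x⟩
      refine if_neg ?_
      rintro ⟨hc, hp⟩
      rw [hprod] at hp
      exact ((tcond_snoc Γ v x g hp).1 hc).2 hg
    · rw [EA, if_neg hg]
      have hterm : ∀ (v : Fin n → G) (x : G),
          (if tcond Γ (n+1) (Fin.snoc v x) ∧ (List.ofFn (Fin.snoc v x : Fin (n+1) → G)).prod = g
            then ∏ i, em μ ((Fin.snoc v x : Fin (n+1) → G) i) else 0)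
          = if tcond Γ n v ∧ (List.ofFn v).prod * x = g then (∏ i, em μ (v i)) * em μ x else 0 := by
        intro v x
        rw [prod_em_snoc]
        refine if_congr ?_ rfl rfl
        rw [hprod]
        constructor
        · rintro ⟨hc, hp⟩
          exact ⟨((tcond_snoc Γ v x g hp).1 hc).1, hp⟩
        · rintro ⟨hc, hp⟩
          exact ⟨(tcond_snoc Γ v x g hp).2 ⟨hc, hg⟩, hp⟩
      calc (∑' q : (Fin n → G) × G,
              if tcond Γ (n+1) (Fin.snoc q.1 q.2) ∧ (List.ofFn (Fin.snoc q.1 q.2 : Fin (n+1) → G)).prod = g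
              then ∏ i, em μ ((Fin.snoc q.1 q.2 : Fin (n+1) → G) i) else 0)
          = ∑' (v : Fin n → G) (x : G),
              if tcond Γ n v ∧ (List.ofFn v).prod * x = g then (∏ i, em μ (v i)) * em μ x else 0 := by
            rw [← ENNReal.tsum_prod]
            exact tsum_congr fun q => hterm q.1 q.2
        _ = ∑' h, EW μ Γ n h * em μ (h⁻¹ * g) := mid μ Γ n g
        _ = ∑' h, EA μ Γ n h * em μ (h⁻¹ * g) := tsum_congr fun h => by rw [ih]

/-! ### Coset layer -/

def pr (g : G) : Quotient (QuotientGroup.rightRel Γ) := Quotient.mk _ g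

abbrev Cos (Γ : Subgroup G) := Quotient (QuotientGroup.rightRel Γ)

lemma pr_eq_iff {a b : G} : pr Γ a = pr Γ b ↔ b * a⁻¹ ∈ Γ := by
  constructor
  · intro h
    exact (QuotientGroup.rightRel_apply).1 (Quotient.exact h)
  · intro h
    exact Quotient.sound ((QuotientGroup.rightRel_apply).2 h)

lemma pr_mul_right {a b : G} (h : pr Γ a = pr Γ b) (u : G) :
    pr Γ (a * u) = pr Γ (b * u) := by
  rw [pr_eq_iff] at h ⊢
  simpa [mul_assoc] using h

lemma pr_mul_right_iff {a b : G} (u : G) :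
    pr Γ (a * u) = pr Γ (b * u) ↔ pr Γ a = pr Γ b := by
  constructor
  · intro h
    have := pr_mul_right Γ h u⁻¹
    simpa [mul_assoc] using this
  · intro h; exact pr_mul_right Γ h u

lemma pr_out (c : Cos Γ) : pr Γ c.out = c := Quotient.out_eq c

lemma mem_iff_pr {g : G} : g ∈ Γ ↔ pr Γ g = pr Γ 1 := by
  rw [pr_eq_iff]
  simp [Subgroup.inv_mem_iff]

noncomputable def acos (n : ℕ) (c : Cos Γ) : ℝ≥0∞ :=
  ∑' g, if pr Γ g = c then EA μ Γ n g else 0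

noncomputable def pk (d c : Cos Γ) : ℝ≥0∞ :=
  ∑' u, if pr Γ (d.out * u) = c then em μ u else 0

/-- partition of a sum over `G` into cosets -/
lemma tsum_partition (F : G → ℝ≥0∞) :
    ∑' (c : Cos Γ), ∑' g, (if pr Γ g = c then F g else 0) = ∑' g, F g := by
  rw [ENNReal.tsum_comm]
  refine tsum_congr fun g => ?_
  rw [tsum_eq_single (pr Γ g)]
  · rw [if_pos rfl]
  · intro c hc
    rw [if_neg (fun h => hc h.symm)]

lemma pk_eq (h : G) (c : Cos Γ) :
    ∑' u, (if pr Γ (h * u) = c then em μ u else 0) = pk μ Γ (pr Γ h) c := by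
  refine tsum_congr fun u => ?_
  rw [pr_mul_right Γ (pr_out Γ (pr Γ h)) u]

lemma key (n : ℕ) (c : Cos Γ) :
    ∑' (d : Cos Γ), acos μ Γ n d * pk μ Γ d c
      = ∑' g, (if pr Γ g = c then (∑' h, EA μ Γ n h * em μ (h⁻¹ * g)) else 0) := by
  have step1 : ∀ g : G, (if pr Γ g = c then (∑' h, EA μ Γ n h * em μ (h⁻¹ * g)) else 0)
      = ∑' h, (if pr Γ g = c then EA μ Γ n h * em μ (h⁻¹ * g) else 0) := by
    intro g
    by_cases hgc : pr Γ g = c <;> simp [hgc]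
  calc ∑' (d : Cos Γ), acos μ Γ n d * pk μ Γ d c
      = ∑' (d : Cos Γ), ∑' h, (if pr Γ h = d then EA μ Γ n h * pk μ Γ d c else 0) := by
        refine tsum_congr fun d => ?_
        rw [acos, ← ENNReal.tsum_mul_right]
        exact tsum_congr fun h => by rw [ite_mul, zero_mul]
    _ = ∑' (d : Cos Γ), ∑' h, (if pr Γ h = d then EA μ Γ n h * pk μ Γ (pr Γ h) c else 0) := by
        refine tsum_congr fun d => tsum_congr fun h => ?_
        by_cases hd : pr Γ h = d
        · rw [if_pos hd, if_pos hd, hd]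
        · rw [if_neg hd, if_neg hd]
    _ = ∑' h, EA μ Γ n h * pk μ Γ (pr Γ h) c :=
        tsum_partition Γ _
    _ = ∑' h, EA μ Γ n h * ∑' g, (if pr Γ (h * g) = c then em μ g else 0) := by
        refine tsum_congr fun h => ?_
        rw [pk_eq]
    _ = ∑' h, ∑' g, (if pr Γ g = c then EA μ Γ n h * em μ (h⁻¹ * g) else 0) := by
        refine tsum_congr fun h => ?_
        rw [← (Equiv.mulLeft h).tsum_eq fun g => (if pr Γ g = c then EA μ Γ n h * em μ (h⁻¹ * g) else 0),
          ← ENNReal.tsum_mul_left]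
        refine tsum_congr fun g => ?_
        simp only [Equiv.coe_mulLeft, mul_ite, mul_zero]
        by_cases hc : pr Γ (h * g) = c
        · simp [hc]
        · simp [hc]
    _ = ∑' g, (if pr Γ g = c then (∑' h, EA μ Γ n h * em μ (h⁻¹ * g)) else 0) := by
        rw [ENNReal.tsum_comm]
        exact tsum_congr fun g => (step1 g).symm

lemma acos_zero (c : Cos Γ) : acos μ Γ 0 c = if c = pr Γ 1 then 1 else 0 := by
  rw [acos, tsum_eq_single 1]
  · simp only [EA, if_pos rfl]
    by_cases hc : c = pr Γ 1
    · rw [if_pos hc.symm, if_pos hc]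
      simp
    · rw [if_neg (fun h => hc h.symm), if_neg hc]
  · intro g hg
    simp [EA, hg]

lemma acos_succ_base (n : ℕ) : acos μ Γ (n+1) (pr Γ 1) = 0 := by
  rw [acos, ENNReal.tsum_eq_zero]
  intro g
  by_cases hg : pr Γ g = pr Γ 1
  · rw [if_pos hg, EA, if_pos ((mem_iff_pr Γ).2 hg)]
  · rw [if_neg hg]

lemma acos_succ (n : ℕ) (c : Cos Γ) (hc : c ≠ pr Γ 1) :
    acos μ Γ (n+1) c = ∑' d, acos μ Γ n d * pk μ Γ d c := by
  rw [key]
  refine tsum_congr fun g => ?_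
  by_cases hg : pr Γ g = c
  · rw [if_pos hg, if_pos hg, EA, if_neg]
    intro hmem
    exact hc (hg ▸ (mem_iff_pr Γ).1 hmem)
  · rw [if_neg hg, if_neg hg]

section Total
variable (htot : ∑' u, em μ u = 1)
include htot

lemma pk_col (c : Cos Γ) : ∑' d, pk μ Γ d c = 1 := by
  have hcond : ∀ (d : Cos Γ) (u : G),
      (pr Γ (d.out * u) = c) ↔ (d = pr Γ (c.out * u⁻¹)) := by
    intro d u
    constructor
    · intro h
      have h2 : pr Γ (d.out * u) = pr Γ ((c.out * u⁻¹) * u) := by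
        rw [inv_mul_cancel_right, pr_out]; exact h
      have h3 := (pr_mul_right_iff Γ u).1 h2
      rw [← pr_out Γ d]
      exact h3
    · intro h
      have hd : pr Γ d.out = pr Γ (c.out * u⁻¹) := by rw [pr_out]; exact h
      have h2 := pr_mul_right Γ hd u
      rwa [inv_mul_cancel_right, pr_out] at h2
  calc ∑' d, pk μ Γ d c
      = ∑' (d : Cos Γ) (u : G), if d = pr Γ (c.out * u⁻¹) then em μ u else 0 := by
        refine tsum_congr fun d => tsum_congr fun u => ?_
        by_cases h : pr Γ (d.out * u) = c
        · rw [if_pos h, if_pos ((hcond d u).1 h)]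
        · rw [if_neg h, if_neg (fun h' => h ((hcond d u).2 h'))]
    _ = ∑' (u : G) (d : Cos Γ), if d = pr Γ (c.out * u⁻¹) then em μ u else 0 :=
        ENNReal.tsum_comm
    _ = ∑' u, em μ u := tsum_congr fun u => tsum_ite_eq _ _
    _ = 1 := htot

lemma pk_row (d : Cos Γ) : ∑' c, pk μ Γ d c = 1 := by
  calc ∑' c, pk μ Γ d c
      = ∑' (u : G) (c : Cos Γ), if pr Γ (d.out * u) = c then em μ u else 0 :=
        ENNReal.tsum_comm
    _ = ∑' u, em μ u := by
        refine tsum_congr fun u => ?_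
        rw [tsum_eq_single (pr Γ (d.out * u))]
        · rw [if_pos rfl]
        · intro c hc
          rw [if_neg (fun h => hc h.symm)]
    _ = 1 := htot

lemma T_step (n : ℕ) :
    ∑' c, acos μ Γ n c
      = (∑' d, acos μ Γ n d * pk μ Γ d (pr Γ 1)) + ∑' c, acos μ Γ (n+1) c := by
  have base : ∑' c, acos μ Γ n c = ∑' (c : Cos Γ) (d : Cos Γ), acos μ Γ n d * pk μ Γ d c := by
    rw [ENNReal.tsum_comm (f := fun c d => acos μ Γ n d * pk μ Γ d c)]
    refine tsum_congr fun d => ?_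
    rw [ENNReal.tsum_mul_left, pk_row μ Γ htot, mul_one]
  rw [base, ← (tsum_ite_eq (pr Γ 1) (fun _ => ∑' d, acos μ Γ n d * pk μ Γ d (pr Γ 1)) : ∑' c : Cos Γ, (if c = pr Γ 1 then ∑' d, acos μ Γ n d * pk μ Γ d (pr Γ 1) else 0) = ∑' d, acos μ Γ n d * pk μ Γ d (pr Γ 1)), ← ENNReal.tsum_add]
  refine tsum_congr fun c => ?_
  by_cases hc : c = pr Γ 1
  · rw [if_pos hc, hc, acos_succ_base, add_zero]
  · rw [if_neg hc, zero_add, acos_succ μ Γ n c hc]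

lemma H_partial (N : ℕ) :
    (∑ n ∈ Finset.range N, ∑' d, acos μ Γ n d * pk μ Γ d (pr Γ 1)) + ∑' c, acos μ Γ N c = 1 := by
  induction N with
  | zero =>
    simp only [Finset.range_zero, Finset.sum_empty, zero_add]
    calc ∑' c, acos μ Γ 0 c = ∑' c : Cos Γ, if c = pr Γ 1 then 1 else 0 :=
          tsum_congr fun c => acos_zero μ Γ c
      _ = 1 := tsum_ite_eq _ _
  | succ N ih =>
    rw [Finset.sum_range_succ, add_assoc, ← T_step μ Γ htot N]
    exact ih

lemma H_le_one : ∑' n, ∑' d, acos μ Γ n d * pk μ Γ d (pr Γ 1) ≤ 1 := by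
  rw [ENNReal.tsum_eq_iSup_nat]
  refine iSup_le fun N => ?_
  calc ∑ n ∈ Finset.range N, ∑' d, acos μ Γ n d * pk μ Γ d (pr Γ 1)
      ≤ _ + ∑' c, acos μ Γ N c := le_add_right le_rfl
    _ = 1 := H_partial μ Γ htot N

lemma rho_le_one (c : Cos Γ) : (∑' n, acos μ Γ n c) ≤ 1 := by
  have hpartial : ∀ N (c : Cos Γ), ∑ n ∈ Finset.range N, acos μ Γ n c ≤ 1 := by
    intro N
    induction N with
    | zero => intro c; simp
    | succ N ih =>
      intro c
      rw [Finset.sum_range_succ']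
      by_cases hc : c = pr Γ 1
      · have hz : ∀ n ∈ Finset.range N, acos μ Γ (n+1) c = 0 := fun n _ => hc ▸ acos_succ_base μ Γ n
        rw [Finset.sum_congr rfl hz]
        simp [acos_zero, hc]
      · rw [acos_zero, if_neg hc, add_zero]
        calc ∑ n ∈ Finset.range N, acos μ Γ (n+1) c
            = ∑ n ∈ Finset.range N, ∑' d, acos μ Γ n d * pk μ Γ d c :=
              Finset.sum_congr rfl fun n _ => acos_succ μ Γ n c hc
          _ = ∑' d, ∑ n ∈ Finset.range N, acos μ Γ n d * pk μ Γ d c :=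
              (Summable.tsum_finsetSum fun i _ => ENNReal.summable).symm
          _ = ∑' d, (∑ n ∈ Finset.range N, acos μ Γ n d) * pk μ Γ d c := by
              refine tsum_congr fun d => ?_
              rw [Finset.sum_mul]
          _ ≤ ∑' d, 1 * pk μ Γ d c :=
              ENNReal.tsum_le_tsum fun d => mul_le_mul_left (ih d) _
          _ = 1 := by
              simp only [one_mul]
              exact pk_col μ Γ htot c
  rw [ENNReal.tsum_eq_iSup_nat]
  exact iSup_le fun N => hpartial N c

end Total

noncomputable def rho (c : Cos Γ) : ℝ≥0∞ := ∑' n, acos μ Γ n c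

lemma rho_base : rho μ Γ (pr Γ 1) = 1 := by
  rw [rho]
  have : ∀ n : ℕ, acos μ Γ n (pr Γ 1) = if n = 0 then 1 else 0 := by
    intro n
    cases n with
    | zero => simp [acos_zero]
    | succ n => simp [acos_succ_base]
  rw [tsum_congr this, tsum_ite_eq]

lemma rho_shift (c : Cos Γ) (hc : c ≠ pr Γ 1) : rho μ Γ c = ∑' n, acos μ Γ (n+1) c := by
  rw [rho, ← Function.Injective.tsum_eq (f := fun n => acos μ Γ n c) Nat.succ_injective]
  intro n hn
  rcases n with _ | n
  · simp only [Function.mem_support, acos_zero, if_neg hc] at hn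
    exact absurd rfl hn
  · exact ⟨n, rfl⟩

lemma rho_stat (htot : ∑' u, em μ u = 1)
    (hH : ∑' n, ∑' d, acos μ Γ n d * pk μ Γ d (pr Γ 1) = 1) (c : Cos Γ) :
    ∑' d, rho μ Γ d * pk μ Γ d c = rho μ Γ c := by
  have base : ∑' d, rho μ Γ d * pk μ Γ d c = ∑' n, ∑' d, acos μ Γ n d * pk μ Γ d c := by
    rw [ENNReal.tsum_comm (f := fun n d => acos μ Γ n d * pk μ Γ d c)]
    refine tsum_congr fun d => ?_
    rw [rho, ← ENNReal.tsum_mul_right]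
  rw [base]
  by_cases hc : c = pr Γ 1
  · rw [hc, hH, rho_base]
  · rw [rho_shift μ Γ c hc]
    exact tsum_congr fun n => (acos_succ μ Γ n c hc).symm

noncomputable def pkN : ℕ → Cos Γ → Cos Γ → ℝ≥0∞
  | 0, d, c => if d = c then 1 else 0
  | (n+1), d, c => ∑' e, pkN n d e * pk μ Γ e c

lemma pkN_col (htot : ∑' u, em μ u = 1) : ∀ n (c : Cos Γ), ∑' d, pkN μ Γ n d c = 1 := by
  intro n
  induction n with
  | zero => intro c; exact tsum_ite_eq _ _
  | succ n ih =>
    intro c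
    calc ∑' d, pkN μ Γ (n+1) d c
        = ∑' (d : Cos Γ) (e : Cos Γ), pkN μ Γ n d e * pk μ Γ e c := rfl
      _ = ∑' (e : Cos Γ) (d : Cos Γ), pkN μ Γ n d e * pk μ Γ e c := ENNReal.tsum_comm
      _ = ∑' (e : Cos Γ), pk μ Γ e c := by
          refine tsum_congr fun e => ?_
          rw [ENNReal.tsum_mul_right, ih e, one_mul]
      _ = 1 := pk_col μ Γ htot c

lemma rho_statN (htot : ∑' u, em μ u = 1)
    (hH : ∑' n, ∑' d, acos μ Γ n d * pk μ Γ d (pr Γ 1) = 1) :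
    ∀ n (c : Cos Γ), ∑' d, rho μ Γ d * pkN μ Γ n d c = rho μ Γ c := by
  intro n
  induction n with
  | zero =>
    intro c
    have : ∀ d : Cos Γ, rho μ Γ d * pkN μ Γ 0 d c = if d = c then rho μ Γ d else 0 := by
      intro d
      by_cases hd : d = c <;> simp [pkN, hd]
    rw [tsum_congr this, tsum_eq_single c (fun d hd => if_neg hd), if_pos rfl]
  | succ n ih =>
    intro c
    calc ∑' d, rho μ Γ d * pkN μ Γ (n+1) d c
        = ∑' (d : Cos Γ) (e : Cos Γ), rho μ Γ d * (pkN μ Γ n d e * pk μ Γ e c) := by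
          refine tsum_congr fun d => ?_
          rw [pkN, ENNReal.tsum_mul_left]
      _ = ∑' (e : Cos Γ) (d : Cos Γ), (rho μ Γ d * pkN μ Γ n d e) * pk μ Γ e c := by
          rw [ENNReal.tsum_comm (f := fun d e => rho μ Γ d * (pkN μ Γ n d e * pk μ Γ e c))]
          exact tsum_congr fun e => tsum_congr fun d => by ring
      _ = ∑' (e : Cos Γ), rho μ Γ e * pk μ Γ e c := by
          refine tsum_congr fun e => ?_
          rw [ENNReal.tsum_mul_right, ih e]
      _ = rho μ Γ c := rho_stat μ Γ htot hH c

lemma pkN_lb : ∀ n (w : Fin n → G) (d : Cos Γ),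
    (∏ i, em μ (w i)) ≤ pkN μ Γ n d (pr Γ (d.out * (List.ofFn w).prod)) := by
  intro n
  induction n with
  | zero =>
    intro w d
    simp only [List.ofFn_zero, List.prod_nil, mul_one, Finset.univ_eq_empty, Finset.prod_empty]
    rw [pkN, pr_out, if_pos rfl]
  | succ n ih =>
    intro w d
    set v : Fin n → G := fun i => w i.castSucc with hv
    set x := w (Fin.last n) with hx
    have hprod : (List.ofFn w).prod = (List.ofFn v).prod * x := by
      rw [List.ofFn_succ', List.concat_eq_append, List.prod_append, List.prod_singleton]
    set e : Cos Γ := pr Γ (d.out * (List.ofFn v).prod) with he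
    have h1 : (∏ i, em μ (v i)) ≤ pkN μ Γ n d e := ih v d
    have h2 : em μ x ≤ pk μ Γ e (pr Γ (d.out * (List.ofFn w).prod)) := by
      have hmem : pr Γ (e.out * x) = pr Γ (d.out * (List.ofFn w).prod) := by
        rw [hprod, ← mul_assoc]
        exact pr_mul_right Γ (by rw [pr_out]) x
      calc em μ x = if pr Γ (e.out * x) = pr Γ (d.out * (List.ofFn w).prod) then em μ x else 0 := by
            rw [if_pos hmem]
        _ ≤ pk μ Γ e (pr Γ (d.out * (List.ofFn w).prod)) := ENNReal.le_tsum x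
    calc ∏ i, em μ (w i) = (∏ i, em μ (v i)) * em μ x := by
          rw [Fin.prod_univ_castSucc]
      _ ≤ pkN μ Γ n d e * pk μ Γ e (pr Γ (d.out * (List.ofFn w).prod)) :=
          mul_le_mul' h1 h2
      _ ≤ pkN μ Γ (n+1) d (pr Γ (d.out * (List.ofFn w).prod)) := ENNReal.le_tsum e

/-! ### Bridge between real and extended-nonnegative-real sums -/

lemma ofReal_tsum_le {α : Type*} (f : α → ℝ) (hf : ∀ a, 0 ≤ f a) :
    ENNReal.ofReal (∑' a, f a) ≤ ∑' a, ENNReal.ofReal (f a) := by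
  by_cases h : Summable f
  · rw [ENNReal.ofReal_tsum_of_nonneg hf h]
  · rw [tsum_eq_zero_of_not_summable h, ENNReal.ofReal_zero]
    exact zero_le

lemma summable_words (hpos : ∀ g, 0 ≤ μ g) (hμs : Summable μ) :
    ∀ n, Summable fun w : Fin n → G => ∏ i, μ (w i) := by
  intro n
  induction n with
  | zero =>
    have : Finite (Fin 0 → G) := by infer_instance
    exact Summable.of_finite
  | succ n ih =>
    have h1 : Summable fun q : (Fin n → G) × G => (∏ i, μ (q.1 i)) * μ q.2 :=
      ih.mul_of_nonneg hμs (fun v => Finset.prod_nonneg fun i _ => hpos _) hpos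
    refine (snocEquiv n).summable_iff.mp ?_
    have : (fun w : Fin (n+1) → G => ∏ i, μ (w i)) ∘ (snocEquiv n) =
        fun q : (Fin n → G) × G => (∏ i, μ (q.1 i)) * μ q.2 := by
      funext q
      simp only [Function.comp_apply, snocEquiv, Equiv.coe_fn_mk]
      rw [Fin.prod_univ_castSucc]
      simp
    rw [this]
    exact h1

lemma summable_ind (hpos : ∀ g, 0 ≤ μ g) (hμs : Summable μ) (n : ℕ)
    (P : (Fin n → G) → Prop) :
    Summable fun w : Fin n → G => if P w then ∏ i, μ (w i) else 0 := by
  refine Summable.of_nonneg_of_le (fun w => ?_) (fun w => ?_) (summable_words μ hpos hμs n)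
  · split
    · exact Finset.prod_nonneg fun i _ => hpos _
    · exact le_rfl
  · split
    · exact le_rfl
    · exact Finset.prod_nonneg fun i _ => hpos _

lemma ofReal_ite_prod (hpos : ∀ g, 0 ≤ μ g) {n : ℕ} (P : Prop) [Decidable P] (w : Fin n → G) :
    ENNReal.ofReal (if P then ∏ i, μ (w i) else 0) =
      if P then ∏ i, em μ (w i) else 0 := by
  split
  · exact ENNReal.ofReal_prod_of_nonneg fun i _ => hpos _
  · exact ENNReal.ofReal_zero

lemma ew_total (n : ℕ) :
    ∑' (g : G), EW μ Γ n g
      = ∑' w : Fin n → G, if tcond Γ n w then ∏ i, em μ (w i) else 0 := by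
  simp only [EW]
  rw [ENNReal.tsum_comm (f := fun g (w : Fin n → G) =>
    if tcond Γ n w ∧ (List.ofFn w).prod = g then ∏ i, em μ (w i) else 0)]
  refine tsum_congr fun w => ?_
  by_cases hc : tcond Γ n w
  · rw [tsum_eq_single ((List.ofFn w).prod), if_pos ⟨hc, rfl⟩, if_pos hc]
    intro g hg
    rw [if_neg]
    rintro ⟨-, hp⟩
    exact hg hp.symm
  · simp [hc]

lemma tail_eq (hpos : ∀ g, 0 ≤ μ g) (hμs : Summable μ) (n : ℕ) :
    ENNReal.ofReal (tailProb μ Γ n) = ∑' c, acos μ Γ n c := by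
  calc ENNReal.ofReal (tailProb μ Γ n)
      = ∑' w : Fin n → G, ENNReal.ofReal
          (if ∀ k, 1 ≤ k → k ≤ n → ((List.ofFn w).take k).prod ∉ Γ then ∏ i, μ (w i) else 0) := by
        rw [tailProb]
        exact ENNReal.ofReal_tsum_of_nonneg
          (fun w => by split
                       · exact Finset.prod_nonneg fun i _ => hpos _
                       · exact le_rfl)
          (summable_ind μ hpos hμs n _)
    _ = ∑' w : Fin n → G, if tcond Γ n w then ∏ i, em μ (w i) else 0 := by
        refine tsum_congr fun w => ?_
        simp only [tcond]
        by_cases h : ∀ k, 1 ≤ k → k ≤ n → ((List.ofFn w).take k).prod ∉ Γ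
        · rw [if_pos h, ENNReal.ofReal_prod_of_nonneg fun i _ => hpos _]
          exact (if_pos h).symm
        · rw [if_neg h, ENNReal.ofReal_zero]
          exact (if_neg h).symm
    _ = ∑' (g : G), EW μ Γ n g := (ew_total μ Γ n).symm
    _ = ∑' (g : G), EA μ Γ n g := tsum_congr fun g => EW_eq_EA μ Γ n g
    _ = ∑' c, acos μ Γ n c := (tsum_partition Γ (EA μ Γ n)).symm

lemma ES_eq (n : ℕ) (g : G) :
    (∑' w : Fin (n+1) → G,
        if (∀ k, 1 ≤ k → k < n+1 → (1:G) * ((List.ofFn w).take k).prod ∉ Γ) ∧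
            (1:G) * (List.ofFn w).prod = g
        then ∏ i, em μ (w i) else 0)
      = ∑' h, EA μ Γ n h * em μ (h⁻¹ * g) := by
  rw [← (snocEquiv n).tsum_eq]
  simp only [snocEquiv, Equiv.coe_fn_mk]
  have hprod : ∀ (v : Fin n → G) (x : G),
      (List.ofFn (Fin.snoc v x : Fin (n+1) → G)).prod = (List.ofFn v).prod * x := by
    intro v x
    rw [ofFn_snoc, List.prod_append, List.prod_singleton]
  have hterm : ∀ (v : Fin n → G) (x : G),
      (if (∀ k, 1 ≤ k → k < n+1 →
            (1:G) * ((List.ofFn (Fin.snoc v x : Fin (n+1) → G)).take k).prod ∉ Γ) ∧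
          (1:G) * (List.ofFn (Fin.snoc v x : Fin (n+1) → G)).prod = g
        then ∏ i, em μ ((Fin.snoc v x : Fin (n+1) → G) i) else 0)
      = if tcond Γ n v ∧ (List.ofFn v).prod * x = g then (∏ i, em μ (v i)) * em μ x else 0 := by
    intro v x
    rw [prod_em_snoc]
    refine if_congr ?_ rfl rfl
    simp only [one_mul]
    rw [hprod]
    have hc1 : (∀ k, 1 ≤ k →
        k < n+1 → ((List.ofFn (Fin.snoc v x : Fin (n+1) → G)).take k).prod ∉ Γ) ↔ tcond Γ n v := by
      rw [ofFn_snoc]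
      constructor
      · intro h k h1 h2
        have := h k h1 (Nat.lt_succ_of_le h2)
        rwa [List.take_append_of_le_length (by simpa using h2)] at this
      · intro h k h1 h2
        rw [List.take_append_of_le_length (by simpa using Nat.lt_succ_iff.mp h2)]
        exact h k h1 (Nat.lt_succ_iff.mp h2)
    exact and_congr hc1 Iff.rfl
  calc (∑' q : (Fin n → G) × G,
          if (∀ k, 1 ≤ k → k < n+1 →
                (1:G) * ((List.ofFn (Fin.snoc q.1 q.2 : Fin (n+1) → G)).take k).prod ∉ Γ) ∧
              (1:G) * (List.ofFn (Fin.snoc q.1 q.2 : Fin (n+1) → G)).prod = g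
          then ∏ i, em μ ((Fin.snoc q.1 q.2 : Fin (n+1) → G) i) else 0)
      = ∑' (v : Fin n → G) (x : G),
          if tcond Γ n v ∧ (List.ofFn v).prod * x = g then (∏ i, em μ (v i)) * em μ x else 0 := by
        rw [← ENNReal.tsum_prod]
        exact tsum_congr fun q => hterm q.1 q.2
    _ = ∑' h, EW μ Γ n h * em μ (h⁻¹ * g) := mid μ Γ n g
    _ = ∑' h, EA μ Γ n h * em μ (h⁻¹ * g) := tsum_congr fun h => by rw [EW_eq_EA]

lemma Hn_eq (n : ℕ) :
    (∑' d, acos μ Γ n d * pk μ Γ d (pr Γ 1))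
      = ∑' g, if g ∈ Γ then (∑' h, EA μ Γ n h * em μ (h⁻¹ * g)) else 0 := by
  rw [key]
  exact tsum_congr fun g => if_congr (mem_iff_pr Γ).symm rfl rfl

lemma one_le_H (hpos : ∀ g, 0 ≤ μ g) (hrec1 : ∑' γ : Γ, hitProb μ Γ 1 ↑γ = 1) :
    1 ≤ ∑' n, ∑' d, acos μ Γ n d * pk μ Γ d (pr Γ 1) := by
  have step1 : (1 : ℝ≥0∞) ≤ ∑' (γ : Γ) (n : ℕ), ∑' h, EA μ Γ n h * em μ (h⁻¹ * ↑γ) := by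
    have h0 : (1 : ℝ≥0∞) = ENNReal.ofReal (∑' γ : Γ, hitProb μ Γ 1 ↑γ) := by
      rw [hrec1, ENNReal.ofReal_one]
    rw [h0]
    calc ENNReal.ofReal (∑' γ : Γ, hitProb μ Γ 1 ↑γ)
        ≤ ∑' γ : Γ, ENNReal.ofReal (hitProb μ Γ 1 ↑γ) :=
          ofReal_tsum_le _ fun γ => tsum_nonneg fun n => tsum_nonneg fun w => by
            split
            · exact Finset.prod_nonneg fun i _ => hpos _
            · exact le_rfl
      _ ≤ ∑' (γ : Γ) (n : ℕ), ENNReal.ofReal (stepHit μ Γ 1 (n+1) ↑γ) :=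
          ENNReal.tsum_le_tsum fun γ => by
            rw [hitProb]
            exact ofReal_tsum_le _ fun n => tsum_nonneg fun w => by
              split
              · exact Finset.prod_nonneg fun i _ => hpos _
              · exact le_rfl
      _ ≤ ∑' (γ : Γ) (n : ℕ), ∑' h, EA μ Γ n h * em μ (h⁻¹ * ↑γ) := by
          refine ENNReal.tsum_le_tsum fun γ => ENNReal.tsum_le_tsum fun n => ?_
          rw [stepHit]
          calc ENNReal.ofReal (∑' w : Fin (n+1) → G, _)
              ≤ ∑' w : Fin (n+1) → G, ENNReal.ofReal
                  (if (∀ k, 1 ≤ k → k < n+1 → (1:G) * ((List.ofFn w).take k).prod ∉ Γ) ∧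
                      (1:G) * (List.ofFn w).prod = ↑γ
                  then ∏ i, μ (w i) else 0) :=
                ofReal_tsum_le _ fun w => by
                  split
                  · exact Finset.prod_nonneg fun i _ => hpos _
                  · exact le_rfl
            _ = ∑' w : Fin (n+1) → G,
                  (if (∀ k, 1 ≤ k → k < n+1 → (1:G) * ((List.ofFn w).take k).prod ∉ Γ) ∧
                      (1:G) * (List.ofFn w).prod = ↑γ
                  then ∏ i, em μ (w i) else 0) :=
                by
                refine tsum_congr fun w => ?_
                by_cases h : (∀ k, 1 ≤ k → k < n+1 → (1:G) * ((List.ofFn w).take k).prod ∉ Γ) ∧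
                    (1:G) * (List.ofFn w).prod = ↑γ
                · rw [if_pos h, if_pos h, ENNReal.ofReal_prod_of_nonneg fun i _ => hpos _]
                  rfl
                · rw [if_neg h, if_neg h, ENNReal.ofReal_zero]
            _ = ∑' h, EA μ Γ n h * em μ (h⁻¹ * ↑γ) := ES_eq μ Γ n ↑γ
  calc (1 : ℝ≥0∞)
      ≤ ∑' (γ : Γ) (n : ℕ), ∑' h, EA μ Γ n h * em μ (h⁻¹ * ↑γ) := step1
    _ = ∑' (n : ℕ) (γ : Γ), ∑' h, EA μ Γ n h * em μ (h⁻¹ * ↑γ) := ENNReal.tsum_comm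
    _ = ∑' n, ∑' d, acos μ Γ n d * pk μ Γ d (pr Γ 1) := by
        refine tsum_congr fun n => ?_
        rw [Hn_eq]
        have hinj := Function.Injective.tsum_eq
          (g := (Subtype.val : Γ → G))
          (f := fun g => if g ∈ Γ then (∑' h, EA μ Γ n h * em μ (h⁻¹ * g)) else 0)
          Subtype.val_injective ?_
        · rw [← hinj]
          refine tsum_congr fun γ => ?_
          rw [if_pos γ.2]
        · intro g hg
          by_cases h : g ∈ Γ
          · exact ⟨⟨g, h⟩, rfl⟩
          · exact absurd (if_neg h) hg

end NullRec

open NullRec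

/-- A `μ`-recurrent subgroup of infinite index is null recurrent: the expected
return time `E[τ] = ∑_{n ≥ 0} P(τ > n)` is infinite, i.e. the tail probabilities
are not summable. -/
theorem infinite_index_null_recurrent {G : Type*} [Group G] [Countable G]
    (μ : G → ℝ) (Γ : Subgroup G)
    (hpos : ∀ g, 0 ≤ μ g) (hsum : ∑' g, μ g = 1)
    (hgen : ∀ g : G, ∃ n : ℕ, 1 ≤ n ∧ ∃ w : Fin n → G,
      (∀ i, 0 < μ (w i)) ∧ (List.ofFn w).prod = g)
    (hrec : ∀ x : G, ∑' γ : Γ, hitProb μ Γ x ↑γ = 1)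
    (hinf : Γ.index = 0) :
    ¬ Summable (fun n : ℕ => tailProb μ Γ n) := by
  intro hS
  have hμs : Summable μ := by
    by_contra h
    rw [tsum_eq_zero_of_not_summable h] at hsum
    norm_num at hsum
  have htot : ∑' u, em μ u = 1 := by
    show ∑' u, ENNReal.ofReal (μ u) = 1
    rw [← ENNReal.ofReal_tsum_of_nonneg hpos hμs, hsum, ENNReal.ofReal_one]
  have hH : ∑' n, ∑' d, acos μ Γ n d * pk μ Γ d (pr Γ 1) = 1 :=
    le_antisymm (H_le_one μ Γ htot) (one_le_H μ Γ hpos (hrec 1))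
  have hrhole : ∀ c : Cos Γ, rho μ Γ c ≤ 1 := fun c => rho_le_one μ Γ htot c
  -- every coset has hitting mass exactly one
  have hrho1 : ∀ c : Cos Γ, rho μ Γ c = 1 := by
    intro c
    obtain ⟨n, -, w, hwpos, hwprod⟩ := hgen (c.out)⁻¹
    have hlb := pkN_lb μ Γ n w c
    rw [hwprod, mul_inv_cancel] at hlb
    have hpkpos : pkN μ Γ n c (pr Γ 1) ≠ 0 := by
      intro h0
      rw [h0] at hlb
      have hz : ∏ i, em μ (w i) = 0 := le_antisymm hlb zero_le
      exact (Finset.prod_ne_zero_iff.mpr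
        fun i _ => (ENNReal.ofReal_pos.2 (hwpos i)).ne') hz
    have hX : (∑' d, (1 - rho μ Γ d) * pkN μ Γ n d (pr Γ 1)) + 1 = 1 := by
      calc (∑' d, (1 - rho μ Γ d) * pkN μ Γ n d (pr Γ 1)) + 1
          = (∑' d, (1 - rho μ Γ d) * pkN μ Γ n d (pr Γ 1))
              + ∑' d, rho μ Γ d * pkN μ Γ n d (pr Γ 1) := by
            rw [rho_statN μ Γ htot hH n (pr Γ 1), rho_base]
        _ = ∑' d, ((1 - rho μ Γ d) * pkN μ Γ n d (pr Γ 1)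
              + rho μ Γ d * pkN μ Γ n d (pr Γ 1)) := (ENNReal.tsum_add).symm
        _ = ∑' d, 1 * pkN μ Γ n d (pr Γ 1) := by
            refine tsum_congr fun d => ?_
            rw [← add_mul, tsub_add_cancel_of_le (hrhole d)]
        _ = 1 := by
            simp only [one_mul]
            exact pkN_col μ Γ htot n (pr Γ 1)
    have hX0 : ∑' d, (1 - rho μ Γ d) * pkN μ Γ n d (pr Γ 1) = 0 := by
      have h1 : (∑' d, (1 - rho μ Γ d) * pkN μ Γ n d (pr Γ 1)) + 1 = 0 + (1:ℝ≥0∞) := by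
        rw [zero_add]
        exact hX
      exact (ENNReal.add_left_inj (by simp)).mp h1
    have hc0 : (1 - rho μ Γ c) * pkN μ Γ n c (pr Γ 1) = 0 :=
      le_antisymm (hX0 ▸ ENNReal.le_tsum c) zero_le
    rcases mul_eq_zero.mp hc0 with h | h
    · exact le_antisymm (hrhole c) (tsub_eq_zero_iff_le.mp h)
    · exact absurd h hpkpos
  -- but the total hitting mass is finite
  have hfin : ∑' (c : Cos Γ), rho μ Γ c ≠ ⊤ := by
    have heq : ∑' (c : Cos Γ), rho μ Γ c = ENNReal.ofReal (∑' n, tailProb μ Γ n) := by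
      calc ∑' (c : Cos Γ), rho μ Γ c
          = ∑' (c : Cos Γ) (n : ℕ), acos μ Γ n c := rfl
        _ = ∑' (n : ℕ) (c : Cos Γ), acos μ Γ n c := ENNReal.tsum_comm
        _ = ∑' n, ENNReal.ofReal (tailProb μ Γ n) :=
            tsum_congr fun n => (tail_eq μ Γ hpos hμs n).symm
        _ = ENNReal.ofReal (∑' n, tailProb μ Γ n) :=
            (ENNReal.ofReal_tsum_of_nonneg
              (fun n => tsum_nonneg fun w => by
                split
                · exact Finset.prod_nonneg fun i _ => hpos _
                · exact le_rfl) hS).symm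
    rw [heq]
    exact ENNReal.ofReal_ne_top
  have hinfinite : Infinite (Cos Γ) := by
    have h1 : Nat.card (G ⧸ Γ) = 0 := hinf
    have h2 : Infinite (G ⧸ Γ) := by
      rcases Nat.card_eq_zero.mp h1 with h | h
      · exact absurd (⟨QuotientGroup.mk 1⟩ : Nonempty (G ⧸ Γ)) (not_nonempty_iff.mpr h)
      · exact h
    exact (QuotientGroup.quotientRightRelEquivQuotientLeftRel Γ).infinite_iff.mpr h2
  refine hfin ?_
  rw [tsum_congr hrho1]
  exact ENNReal.tsum_const_eq_top_of_ne_zero one_ne_zero
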